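/- Let (H, R) be a quasi-triangular Hopf algebra, A a left H-module algebra, χ(a ⊗ b) = (R₂ ▷ b) ⊗ (R₁ ▷ a), and [a,b]_χ := ab − m(χ(a ⊗ b)). Then the generalized Leibniz rule on the first variable holds: writing χ(b ⊗ c) = Σᵢ σᵢ ⊗ eᵢ, one has [ab, c]_χ = Σᵢ [a, σᵢ]_χ · eᵢ + a · [b,c]_χ for all a, b, c ∈ A. -/

import Mathlib

/- STATEMENT 0: The R-matrix of a quasi-triangular Hopf algebra satisfies the
quantum Yang–Baxter equation R₁₂R₁₃R₂₃ = R₂₃R₁₃R₁₂ in H ⊗ H ⊗ H. -/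

open TensorProduct

noncomputable section

variable (k H : Type*) [Field k] [Ring H] [HopfAlgebra k H]

/-- `a ⊗ b ↦ a ⊗ b ⊗ 1` (legs 1,2 of `(H ⊗ H) ⊗ H`). -/
def leg12 : H ⊗[k] H →ₐ[k] (H ⊗[k] H) ⊗[k] H := Algebra.TensorProduct.includeLeft

/-- `a ⊗ b ↦ a ⊗ 1 ⊗ b` (legs 1,3 of `(H ⊗ H) ⊗ H`). -/
def leg13 : H ⊗[k] H →ₐ[k] (H ⊗[k] H) ⊗[k] H :=
  Algebra.TensorProduct.map Algebra.TensorProduct.includeLeft (AlgHom.id k H)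

/-- `a ⊗ b ↦ 1 ⊗ a ⊗ b` (legs 2,3 of `(H ⊗ H) ⊗ H`). -/
def leg23 : H ⊗[k] H →ₐ[k] (H ⊗[k] H) ⊗[k] H :=
  Algebra.TensorProduct.map Algebra.TensorProduct.includeRight (AlgHom.id k H)

/-- `a ⊗ b ↦ a ⊗ (b ⊗ 1)` (legs 1,2 of `H ⊗ (H ⊗ H)`). -/
def leg12' : H ⊗[k] H →ₐ[k] H ⊗[k] (H ⊗[k] H) :=
  Algebra.TensorProduct.map (AlgHom.id k H) Algebra.TensorProduct.includeLeft

/-- `a ⊗ b ↦ a ⊗ (1 ⊗ b)` (legs 1,3 of `H ⊗ (H ⊗ H)`). -/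
def leg13' : H ⊗[k] H →ₐ[k] H ⊗[k] (H ⊗[k] H) :=
  Algebra.TensorProduct.map (AlgHom.id k H) Algebra.TensorProduct.includeRight

/-- A quasi-triangular structure on the Hopf algebra `H`: an invertible element
`R ∈ H ⊗ H` such that `Δᵒᵖ(h) = R Δ(h) R⁻¹`, `(Δ ⊗ id)(R) = R₁₃R₂₃` and
`(id ⊗ Δ)(R) = R₁₃R₁₂`. -/
structure QuasiTriangular where
  R : H ⊗[k] H
  Rinv : H ⊗[k] H
  mul_inv : R * Rinv = 1
  inv_mul : Rinv * R = 1
  intertwine : ∀ h : H,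
    (TensorProduct.comm k H H) (Coalgebra.comul h) = R * Coalgebra.comul h * Rinv
  comul_id : TensorProduct.map Coalgebra.comul LinearMap.id R = leg13 k H R * leg23 k H R
  id_comul : TensorProduct.map LinearMap.id Coalgebra.comul R = leg13' k H R * leg12' k H R

variable (A : Type*) [Ring A] [Algebra k A]

/-- A left `H`-module-algebra structure on the `k`-algebra `A`: an action of `H`
by `k`-linear endomorphisms such that `h ▷ (ab) = (h₁ ▷ a)(h₂ ▷ b)` and
`h ▷ 1 = ε(h) 1`. -/
structure ModuleAlgebra where
  act : H →ₐ[k] Module.End k A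
  act_mul : ∀ (h : H) (a b : A), act h (a * b) =
    LinearMap.mul' k A
      ((TensorProduct.homTensorHomMap (RingHom.id k) A A A A)
        ((TensorProduct.map act.toLinearMap act.toLinearMap) (Coalgebra.comul h))
        (a ⊗ₜ[k] b))
  act_one : ∀ h : H, act h (1 : A) = Coalgebra.counit (R := k) h • (1 : A)

variable {k H A}

/-- The braiding associated to an element `R = Σ R₁ ⊗ R₂` of `H ⊗ H`:
`a ⊗ b ↦ (R₂ ▷ b) ⊗ (R₁ ▷ a)`. -/
def braid (MA : ModuleAlgebra k H A) (R : H ⊗[k] H) : A ⊗[k] A →ₗ[k] A ⊗[k] A :=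
  (TensorProduct.comm k A A).toLinearMap ∘ₗ
    (TensorProduct.homTensorHomMap (RingHom.id k) A A A A)
      ((TensorProduct.map MA.act.toLinearMap MA.act.toLinearMap) R)

/-- The deformed commutator `[a,b]_χ = m((id - χ)(a ⊗ b))` associated to a braiding
`χ : A ⊗ A → A ⊗ A`. -/
def qBracket (χ : A ⊗[k] A →ₗ[k] A ⊗[k] A) : A ⊗[k] A →ₗ[k] A :=
  LinearMap.mul' k A ∘ₗ (LinearMap.id - χ)

/-- `χ ⊗ id` acting on `A ⊗ (A ⊗ A)`. -/
def leftOp (χ : A ⊗[k] A →ₗ[k] A ⊗[k] A) : A ⊗[k] (A ⊗[k] A) →ₗ[k] A ⊗[k] (A ⊗[k] A) :=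
  (TensorProduct.assoc k A A A).toLinearMap ∘ₗ LinearMap.rTensor A χ ∘ₗ
    (TensorProduct.assoc k A A A).symm.toLinearMap

/-- `id ⊗ χ` acting on `A ⊗ (A ⊗ A)`. -/
def rightOp (χ : A ⊗[k] A →ₗ[k] A ⊗[k] A) : A ⊗[k] (A ⊗[k] A) →ₗ[k] A ⊗[k] (A ⊗[k] A) :=
  LinearMap.lTensor A χ

/-- `m ⊗ id : A ⊗ (A ⊗ A) → A ⊗ A`, multiplying the first two factors. -/
def mul12 : A ⊗[k] (A ⊗[k] A) →ₗ[k] A ⊗[k] A :=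
  LinearMap.rTensor A (LinearMap.mul' k A) ∘ₗ (TensorProduct.assoc k A A A).symm.toLinearMap

/-- `id ⊗ m : A ⊗ (A ⊗ A) → A ⊗ A`, multiplying the last two factors. -/
def mul23 : A ⊗[k] (A ⊗[k] A) →ₗ[k] A ⊗[k] A :=
  LinearMap.lTensor A (LinearMap.mul' k A)

/-! ### Auxiliary machinery for the proof -/

/-- `x ⊗ y ↦ (act x ⊗ act y)` as an operator on `A ⊗ A`, linear in `x ⊗ y`. -/
def actT (MA : ModuleAlgebra k H A) : H ⊗[k] H →ₗ[k] (A ⊗[k] A →ₗ[k] A ⊗[k] A) :=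
  TensorProduct.homTensorHomMap (RingHom.id k) A A A A ∘ₗ
    TensorProduct.map MA.act.toLinearMap MA.act.toLinearMap

/-- `(x ⊗ y) ⊗ z ↦ (act x ⊗ act y) ⊗ act z` as an operator on `(A ⊗ A) ⊗ A`. -/
def actT3 (MA : ModuleAlgebra k H A) :
    (H ⊗[k] H) ⊗[k] H →ₗ[k] ((A ⊗[k] A) ⊗[k] A →ₗ[k] (A ⊗[k] A) ⊗[k] A) :=
  TensorProduct.homTensorHomMap (RingHom.id k) (A ⊗[k] A) A (A ⊗[k] A) A ∘ₗ
    TensorProduct.map (actT MA) MA.act.toLinearMap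

/-- `((u ⊗ v) ⊗ w) ↦ w * (u * v)`. -/
def mu3 : (A ⊗[k] A) ⊗[k] A →ₗ[k] A :=
  LinearMap.mul' k A ∘ₗ (TensorProduct.comm k A A).toLinearMap ∘ₗ
    LinearMap.rTensor A (LinearMap.mul' k A)

/-- `Fmap MA ((x ⊗ y) ⊗ z)` sends `(a ⊗ b) ⊗ c` to `(z ▷ c) * ((x ▷ a) * (y ▷ b))`. -/
def Fmap (MA : ModuleAlgebra k H A) :
    (H ⊗[k] H) ⊗[k] H →ₗ[k] ((A ⊗[k] A) ⊗[k] A →ₗ[k] A) :=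
  LinearMap.llcomp k ((A ⊗[k] A) ⊗[k] A) ((A ⊗[k] A) ⊗[k] A) A mu3 ∘ₗ actT3 MA

lemma Fmap_tmul (MA : ModuleAlgebra k H A) (x y z : H) (a b c : A) :
    Fmap MA ((x ⊗ₜ[k] y) ⊗ₜ[k] z) ((a ⊗ₜ[k] b) ⊗ₜ[k] c) =
      MA.act z c * (MA.act x a * MA.act y b) := by
  simp [Fmap, actT3, actT, mu3]

lemma braid_zero (MA : ModuleAlgebra k H A) : braid MA (0 : H ⊗[k] H) = 0 := by
  simp [braid, LinearMap.comp_zero]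

lemma braid_add (MA : ModuleAlgebra k H A) (u v : H ⊗[k] H) :
    braid MA (u + v) = braid MA u + braid MA v := by
  simp [braid, LinearMap.comp_add]

lemma braid_tmul (MA : ModuleAlgebra k H A) (ρ σ : H) (a b : A) :
    braid MA (ρ ⊗ₜ[k] σ) (a ⊗ₜ[k] b) = MA.act σ b ⊗ₜ[k] MA.act ρ a := by
  simp [braid]

/-- Key computation for the left-hand side:
`m(χ_ρ((a b) ⊗ c)) = F((Δ ⊗ id)(ρ))((a ⊗ b) ⊗ c)`. -/
lemma key_left (MA : ModuleAlgebra k H A) (ρ : H ⊗[k] H) (a b c : A) :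
    LinearMap.mul' k A (braid MA ρ ((a * b) ⊗ₜ[k] c)) =
      Fmap MA (TensorProduct.map Coalgebra.comul LinearMap.id ρ) ((a ⊗ₜ[k] b) ⊗ₜ[k] c) := by
  induction ρ using TensorProduct.induction_on with
  | zero => simp [braid_zero]
  | add u v hu hv =>
      simp only [braid_add, map_add, LinearMap.add_apply]
      rw [hu, hv]
  | tmul x y =>
      rw [braid_tmul, LinearMap.mul'_apply, MA.act_mul x a b, TensorProduct.map_tmul]
      simp only [LinearMap.id_coe, id_eq]
      have : ∀ w : H ⊗[k] H,
          MA.act y c * LinearMap.mul' k A ((TensorProduct.homTensorHomMap (RingHom.id k) A A A A)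
              ((TensorProduct.map MA.act.toLinearMap MA.act.toLinearMap) w) (a ⊗ₜ[k] b)) =
            Fmap MA (w ⊗ₜ[k] y) ((a ⊗ₜ[k] b) ⊗ₜ[k] c) := by
        intro w
        induction w using TensorProduct.induction_on with
        | zero => simp
        | add u v hu hv =>
            simp only [map_add, LinearMap.add_apply, TensorProduct.add_tmul] at *
            rw [mul_add, hu, hv]
        | tmul x₁ x₂ => rw [Fmap_tmul]; simp
      exact this (Coalgebra.comul x)

set_option synthInstance.maxHeartbeats 400000 in
/-- Key computation for the right-hand side:
`Σ m(χ_P(a ⊗ σᵢ)) eᵢ = F(P₁₃ Q₂₃)((a ⊗ b) ⊗ c)` where `χ_Q(b ⊗ c) = Σ σᵢ ⊗ eᵢ`. -/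
lemma key_right (MA : ModuleAlgebra k H A) (P Q : H ⊗[k] H) (a b c : A) :
    LinearMap.mul' k A (LinearMap.rTensor A (LinearMap.mul' k A ∘ₗ braid MA P)
        ((TensorProduct.assoc k A A A).symm (a ⊗ₜ[k] braid MA Q (b ⊗ₜ[k] c)))) =
      Fmap MA (leg13 k H P * leg23 k H Q) ((a ⊗ₜ[k] b) ⊗ₜ[k] c) := by
  induction Q using TensorProduct.induction_on with
  | zero => simp [braid_zero]
  | add u v hu hv =>
      simp only [braid_add, map_add, LinearMap.add_apply, TensorProduct.tmul_add, mul_add]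
      rw [hu, hv]
  | tmul q₁ q₂ =>
      rw [braid_tmul, TensorProduct.assoc_symm_tmul, LinearMap.rTensor_tmul]
      induction P using TensorProduct.induction_on with
      | zero => simp [braid_zero, LinearMap.comp_zero]
      | add u v hu hv =>
          simp only [braid_add, LinearMap.comp_apply, LinearMap.add_apply, map_add,
            TensorProduct.add_tmul, mul_add, add_mul] at *
          rw [hu, hv]
      | tmul p₁ p₂ =>
          rw [LinearMap.comp_apply, braid_tmul, LinearMap.mul'_apply, LinearMap.mul'_apply]
          have hleg : leg13 k H (p₁ ⊗ₜ[k] p₂) * leg23 k H (q₁ ⊗ₜ[k] q₂) =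
              (p₁ ⊗ₜ[k] q₁) ⊗ₜ[k] (p₂ * q₂) := by
            simp [leg13, leg23, Algebra.TensorProduct.tmul_mul_tmul]
          rw [hleg, Fmap_tmul, map_mul, Module.End.mul_apply, mul_assoc]

lemma qBracket_apply (χ : A ⊗[k] A →ₗ[k] A ⊗[k] A) (t : A ⊗[k] A) :
    qBracket χ t = LinearMap.mul' k A t - LinearMap.mul' k A (χ t) := by
  simp [qBracket]

set_option synthInstance.maxHeartbeats 400000 in
lemma mul_rTensor_assoc_symm (a : A) (t : A ⊗[k] A) :
    LinearMap.mul' k A (LinearMap.rTensor A (LinearMap.mul' k A)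
        ((TensorProduct.assoc k A A A).symm (a ⊗ₜ[k] t))) =
      a * LinearMap.mul' k A t := by
  induction t using TensorProduct.induction_on with
  | zero => simp
  | add u v hu hv =>
      simp only [TensorProduct.tmul_add, map_add, mul_add] at *
      rw [hu, hv]
  | tmul u v => simp [mul_assoc]

/- STATEMENT 9: generalized Leibniz rule in the first variable:
`[ab, c]_χ = Σᵢ [a, σᵢ]_χ eᵢ + a [b,c]_χ` where `χ(b ⊗ c) = Σᵢ σᵢ ⊗ eᵢ`; in
operator form `[·,·]_χ ∘ (m ⊗ id) = m ∘ ([·,·]_χ ⊗ id) ∘ (id ⊗ χ) + m ∘ (id ⊗ [·,·]_χ)`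
as maps `A ⊗ A ⊗ A → A`. -/
theorem leibniz_first (QT : QuasiTriangular k H) (MA : ModuleAlgebra k H A) :
    qBracket (braid MA QT.R) ∘ₗ mul12 =
      LinearMap.mul' k A ∘ₗ LinearMap.rTensor A (qBracket (braid MA QT.R)) ∘ₗ
          (TensorProduct.assoc k A A A).symm.toLinearMap ∘ₗ rightOp (braid MA QT.R)
        + LinearMap.mul' k A ∘ₗ LinearMap.lTensor A (qBracket (braid MA QT.R)) := by
  have hq : qBracket (braid MA QT.R) =
      LinearMap.mul' k A - LinearMap.mul' k A ∘ₗ braid MA QT.R := by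
    rw [qBracket, LinearMap.comp_sub, LinearMap.comp_id]
  ext a b c
  simp only [LinearMap.comp_apply, LinearMap.add_apply, rightOp, mul12,
    AlgebraTensorModule.curry_apply, TensorProduct.curry_apply,
    LinearMap.coe_restrictScalars, LinearEquiv.coe_coe, TensorProduct.assoc_symm_tmul,
    LinearMap.rTensor_tmul, LinearMap.lTensor_tmul, LinearMap.mul'_apply]
  rw [qBracket_apply, LinearMap.mul'_apply, key_left MA QT.R a b c, QT.comul_id, hq,
    LinearMap.rTensor_sub, LinearMap.sub_apply, map_sub, mul_rTensor_assoc_symm,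
    key_right MA QT.R QT.R a b c]
  simp only [LinearMap.sub_apply, LinearMap.comp_apply, LinearMap.mul'_apply]
  rw [mul_sub, mul_assoc]
  abel

end
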